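/- Assume the setup of the bucketed truncated-gradient update with ε ∈ (0, 1/2], μ = ε/(4 log(nm/ε)), and α = μ/20. Let x ∈ ℝⁿ with x ≥ 0 and Ax ≤ (1 + ε)·1. Then for every t ∈ {0, …, w−1}: f_μ(x′^{(t)}) ≤ f_μ(x); that is, one update step never increases the smoothed objective. -/

import Mathlib

/-- The smoothed packing objective `f_μ(x) = −∑ᵢ xᵢ + μ ∑ⱼ exp((1/μ)((Ax)ⱼ − 1))`. -/
noncomputable def fmu {m n : ℕ} (A : Matrix (Fin m) (Fin n) ℝ) (μ : ℝ) (x : Fin n → ℝ) : ℝ :=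
  -(∑ i, x i) + μ * ∑ j, Real.exp ((1 / μ) * (A.mulVec x j - 1))

/-- The gradient of `f_μ`: `∇ᵢ f_μ(x) = −1 + ∑ⱼ A_{ji} exp((1/μ)((Ax)ⱼ − 1))`. -/
noncomputable def gradFmu {m n : ℕ} (A : Matrix (Fin m) (Fin n) ℝ) (μ : ℝ) (x : Fin n → ℝ)
    (i : Fin n) : ℝ :=
  -1 + ∑ j, A j i * Real.exp ((1 / μ) * (A.mulVec x j - 1))

/-- Truncated gradient `ξ`: zero on `[−ε, ε]`, capped at `1` above `1`, equal to `g` in between. -/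
noncomputable def xiTrunc {n : ℕ} (ε : ℝ) (g : Fin n → ℝ) (i : Fin n) : ℝ :=
  if g i ∈ Set.Icc (-ε) ε then 0 else if 1 < g i then 1 else g i

/-- The large component `η`: `ηᵢ = gᵢ − 1` when `gᵢ > 1`, and `0` otherwise. -/
noncomputable def etaTrunc {n : ℕ} (g : Fin n → ℝ) (i : Fin n) : ℝ :=
  if 1 < g i then g i - 1 else 0

/-- Bucketed truncated gradient `ξ^{(t)}`: keeps `ξᵢ` when `ξᵢ ∈ (ε2ᵗ, ε2^{t+1}] ∪ [−ε2^{t+1}, −ε2ᵗ)`. -/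
noncomputable def xiBucket {n : ℕ} (ε : ℝ) (ξ : Fin n → ℝ) (t : ℕ) (i : Fin n) : ℝ :=
  if ξ i ∈ Set.Ioc (ε * 2 ^ t) (ε * 2 ^ (t + 1)) ∪ Set.Ico (-(ε * 2 ^ (t + 1))) (-(ε * 2 ^ t))
    then ξ i else 0

/-- Bucketed large component `η^{(t)}`: equals `η` when `t = w − 1`, and `0` otherwise. -/
noncomputable def etaBucket {n : ℕ} (w : ℕ) (η : Fin n → ℝ) (t : ℕ) : Fin n → ℝ :=
  if t = w - 1 then η else 0

/-- The update step: `x′^{(t)}ᵢ = xᵢ · exp(−α ξ^{(t)}ᵢ)`. -/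
noncomputable def updStep {n : ℕ} (α : ℝ) (x ξt : Fin n → ℝ) (i : Fin n) : ℝ :=
  x i * Real.exp (-(α * ξt i))

/-- The number of buckets `w = ⌈log₂(1/ε)⌉`. -/
noncomputable def wBuckets (ε : ℝ) : ℕ := ⌈Real.logb 2 (1 / ε)⌉₊

/-!
Write the update as `x' = x - x * u` (pointwise) with `uᵢ = 1 - exp(-α ξᵢ)`, so that
`|uᵢ| ≤ 2α`, and let `S = A (x * u)` be the resulting decrease of `Ax`. Since `|S| ≤ μ`, the bound
`exp d ≤ 1 + d + d²` for `|d| ≤ 1` replaces every penalty term by its second-order expansion, and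
the identity `Aᵀ p = ∇f_μ + 1` together with Cauchy–Schwarz and `Ax ≤ 3/2` gives
`f_μ(x') - f_μ(x) ≤ ∑ᵢ xᵢ ((3/(2μ)) (gᵢ + 1) uᵢ² - gᵢ uᵢ)`.
Each summand is nonpositive: the truncated gradient lies between `0` and `gᵢ`, hence `uᵢ` has the
sign of `gᵢ`, and `α = μ/20` makes the quadratic loss smaller than the first-order gain.
-/

open Finset Matrix

theorem Real.exp_le_one_add_add_sq {d : ℝ} (hd : |d| ≤ 1) : Real.exp d ≤ 1 + d + d ^ 2 := by
  linarith [(abs_le.mp (Real.abs_exp_sub_one_sub_id_le hd)).2]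

theorem abs_one_sub_exp_neg_mul_le {α v : ℝ} (hα : 0 ≤ α) (hαv : α * |v| ≤ 1) :
    |1 - Real.exp (-(α * v))| ≤ 2 * α * |v| := by
  have h : |-(α * v)| ≤ 1 := by rwa [abs_neg, abs_mul, abs_of_nonneg hα]
  have := Real.abs_exp_sub_one_le h
  rwa [abs_neg, abs_mul, abs_of_nonneg hα, ← mul_assoc, abs_sub_comm] at this

theorem mul_sq_one_sub_exp_le {μ α B g v : ℝ} (hμ : 0 < μ) (hα : 0 ≤ α) (hα1 : α ≤ 1)
    (hB : 0 ≤ B) (hαB : 4 * B * α ≤ μ) (hg : -1 ≤ g) (hv : v ∈ Set.uIcc 0 g) (hv1 : |v| ≤ 1) :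
    B / μ * (g + 1) * (1 - Real.exp (-(α * v))) ^ 2 ≤ g * (1 - Real.exp (-(α * v))) := by
  set u := 1 - Real.exp (-(α * v))
  have hu : |u| ≤ 2 * α * |v| :=
    abs_one_sub_exp_neg_mul_le hα (by nlinarith [abs_nonneg v])
  have hsign : u * g = |u| * |g| := by
    rw [← abs_mul, abs_of_nonneg]
    rcases le_total 0 g with h | h
    · rw [Set.uIcc_of_le h] at hv
      have : 0 ≤ u := by
        simp only [u, sub_nonneg, Real.exp_le_one_iff, neg_nonpos]
        exact mul_nonneg hα hv.1
      exact mul_nonneg this h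
    · rw [Set.uIcc_of_ge h] at hv
      have : u ≤ 0 := by
        simp only [u, sub_nonpos, Real.one_le_exp_iff, neg_nonneg]
        exact mul_nonpos_of_nonneg_of_nonpos hα hv.2
      exact mul_nonneg_of_nonpos_of_nonpos this h
  have hvg : |v| * (g + 1) ≤ 2 * |g| := by
    rcases le_total 0 g with h | h
    · rw [Set.uIcc_of_le h] at hv
      rw [abs_of_nonneg hv.1, abs_of_nonneg h]
      nlinarith [hv.1, hv.2, (abs_le.mp hv1).2]
    · rw [Set.uIcc_of_ge h] at hv
      rw [abs_of_nonpos hv.2, abs_of_nonpos h]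
      nlinarith [hv.1, hv.2, mul_nonneg_of_nonpos_of_nonpos hv.2 h]
  have hc : B / μ * (4 * α) ≤ 1 := by
    rw [div_mul_eq_mul_div, div_le_one hμ]
    linarith
  calc B / μ * (g + 1) * u ^ 2 = B / μ * |u| * (|u| * (g + 1)) := by rw [← sq_abs]; ring
    _ ≤ B / μ * |u| * (2 * α * |v| * (g + 1)) := by gcongr; linarith
    _ = B / μ * |u| * (2 * α * (|v| * (g + 1))) := by ring
    _ ≤ B / μ * |u| * (2 * α * (2 * |g|)) := by gcongr
    _ = B / μ * (4 * α) * (|u| * |g|) := by ring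
    _ ≤ |u| * |g| := mul_le_of_le_one_left (by positivity) hc
    _ = g * u := by rw [mul_comm g, hsign]

section Penalty

variable {m n : ℕ} (A : Matrix (Fin m) (Fin n) ℝ) (μ : ℝ)

noncomputable def penalty (x : Fin n → ℝ) (j : Fin m) : ℝ :=
  Real.exp ((1 / μ) * ((A *ᵥ x) j - 1))

theorem fmu_eq_penalty (x : Fin n → ℝ) : fmu A μ x = -∑ i, x i + μ * ∑ j, penalty A μ x j :=
  rfl

theorem gradFmu_add_one (x : Fin n → ℝ) (i : Fin n) :
    gradFmu A μ x i + 1 = (penalty A μ x ᵥ* A) i := by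
  simp only [gradFmu, penalty, vecMul, dotProduct, mul_comm]
  ring

variable {A}

theorem neg_one_le_gradFmu (hA : ∀ j i, 0 ≤ A j i) (x : Fin n → ℝ) (i : Fin n) :
    -1 ≤ gradFmu A μ x i := by
  have : 0 ≤ (penalty A μ x ᵥ* A) i := by
    simp only [vecMul, dotProduct]
    exact sum_nonneg fun j _ => mul_nonneg (Real.exp_pos _).le (hA j i)
  linarith [gradFmu_add_one A μ x i]

theorem sum_penalty_mul_mulVec (x y : Fin n → ℝ) :
    ∑ j, penalty A μ x j * (A *ᵥ y) j = ∑ i, (gradFmu A μ x i + 1) * y i := by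
  simpa only [dotProduct, gradFmu_add_one] using dotProduct_mulVec (penalty A μ x) A y

theorem penalty_sub_eq (x y : Fin n → ℝ) (j : Fin m) :
    penalty A μ (x - y) j = penalty A μ x j * Real.exp (-((A *ᵥ y) j / μ)) := by
  rw [penalty, penalty, ← Real.exp_add, mulVec_sub, Pi.sub_apply]
  ring_nf

end Penalty

section NonnegMatrix

variable {m n : ℕ} {A : Matrix (Fin m) (Fin n) ℝ} {x : Fin n → ℝ}

theorem abs_mulVec_mul_le (hA : ∀ j i, 0 ≤ A j i) (hx : ∀ i, 0 ≤ x i) {u : Fin n → ℝ} {δ : ℝ}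
    (hu : ∀ i, |u i| ≤ δ) (j : Fin m) : |(A *ᵥ (x * u)) j| ≤ (A *ᵥ x) j * δ := by
  simp only [mulVec, dotProduct, Pi.mul_apply, sum_mul]
  refine (abs_sum_le_sum_abs _ _).trans (sum_le_sum fun i _ => ?_)
  rw [← mul_assoc, abs_mul, abs_of_nonneg (mul_nonneg (hA j i) (hx i))]
  exact mul_le_mul_of_nonneg_left (hu i) (mul_nonneg (hA j i) (hx i))

theorem sq_mulVec_mul_le (hA : ∀ j i, 0 ≤ A j i) (hx : ∀ i, 0 ≤ x i) (u : Fin n → ℝ)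
    (j : Fin m) : (A *ᵥ (x * u)) j ^ 2 ≤ (A *ᵥ x) j * (A *ᵥ (x * u ^ 2)) j := by
  simp only [mulVec, dotProduct, Pi.mul_apply, Pi.pow_apply]
  exact sum_sq_le_sum_mul_sum_of_sq_le_mul _ (fun i _ => mul_nonneg (hA j i) (hx i))
    (fun i _ => mul_nonneg (hA j i) (mul_nonneg (hx i) (sq_nonneg _))) (fun i _ => by ring_nf; rfl)

end NonnegMatrix

section Descent

variable {m n : ℕ} {A : Matrix (Fin m) (Fin n) ℝ} {μ : ℝ} {x : Fin n → ℝ}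

theorem sum_penalty_sub_mul_le (hμ : 0 < μ) (u : Fin n → ℝ)
    (hS : ∀ j, |(A *ᵥ (x * u)) j| ≤ μ) :
    μ * ∑ j, penalty A μ (x - x * u) j ≤ μ * ∑ j, penalty A μ x j
      - ∑ j, penalty A μ x j * (A *ᵥ (x * u)) j
      + 1 / μ * ∑ j, penalty A μ x j * (A *ᵥ (x * u)) j ^ 2 := by
  set S := A *ᵥ (x * u)
  have hrow : ∀ j, penalty A μ (x - x * u) j ≤
      penalty A μ x j * (1 - S j / μ + (S j / μ) ^ 2) := fun j => by
    rw [penalty_sub_eq]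
    have hd : |-(S j / μ)| ≤ 1 := by
      rw [abs_neg, abs_div, abs_of_pos hμ, div_le_one hμ]; exact hS j
    have := Real.exp_le_one_add_add_sq hd
    rw [neg_sq, ← sub_eq_add_neg] at this
    exact mul_le_mul_of_nonneg_left this (Real.exp_pos _).le
  calc μ * ∑ j, penalty A μ (x - x * u) j
      ≤ μ * ∑ j, penalty A μ x j * (1 - S j / μ + (S j / μ) ^ 2) :=
        mul_le_mul_of_nonneg_left (sum_le_sum fun j _ => hrow j) hμ.le
    _ = _ := by
        rw [mul_sum, mul_sum, mul_sum, ← sum_sub_distrib, ← sum_add_distrib]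
        refine sum_congr rfl fun j _ => ?_
        field_simp

theorem fmu_sub_mul_le (hμ : 0 < μ) (hA : ∀ j i, 0 ≤ A j i) (hx : ∀ i, 0 ≤ x i) {B : ℝ}
    (hB : ∀ j, (A *ᵥ x) j ≤ B) {u : Fin n → ℝ} (hS : ∀ j, |(A *ᵥ (x * u)) j| ≤ μ) :
    fmu A μ (x - x * u) ≤ fmu A μ x +
      ∑ i, x i * (B / μ * (gradFmu A μ x i + 1) * u i ^ 2 - gradFmu A μ x i * u i) := by
  set p := penalty A μ x
  set g := gradFmu A μ x
  have hlin : ∑ j, p j * (A *ᵥ (x * u)) j = ∑ i, (g i + 1) * (x i * u i) :=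
    sum_penalty_mul_mulVec μ x (x * u)
  have hquad : ∑ j, p j * (A *ᵥ (x * u)) j ^ 2 ≤ B * ∑ i, (g i + 1) * (x i * u i ^ 2) := by
    have : ∑ i, (g i + 1) * (x i * u i ^ 2) = ∑ j, p j * (A *ᵥ (x * u ^ 2)) j :=
      (sum_penalty_mul_mulVec μ x (x * u ^ 2)).symm
    rw [this, mul_sum]
    refine sum_le_sum fun j _ => ?_
    have hnn : 0 ≤ (A *ᵥ (x * u ^ 2)) j := by
      simp only [mulVec, dotProduct, Pi.mul_apply, Pi.pow_apply]
      exact sum_nonneg fun i _ => mul_nonneg (hA j i) (mul_nonneg (hx i) (sq_nonneg _))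
    calc p j * (A *ᵥ (x * u)) j ^ 2 ≤ p j * ((A *ᵥ x) j * (A *ᵥ (x * u ^ 2)) j) :=
          mul_le_mul_of_nonneg_left (sq_mulVec_mul_le hA hx u j) (Real.exp_pos _).le
      _ ≤ p j * (B * (A *ᵥ (x * u ^ 2)) j) :=
          mul_le_mul_of_nonneg_left (mul_le_mul_of_nonneg_right (hB j) hnn) (Real.exp_pos _).le
      _ = B * (p j * (A *ᵥ (x * u ^ 2)) j) := by ring
  have hsum : ∑ i, (x - x * u) i = ∑ i, x i - ∑ i, x i * u i := by
    simp only [Pi.sub_apply, Pi.mul_apply, sum_sub_distrib]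
  have hrhs : ∑ i, x i * (B / μ * (g i + 1) * u i ^ 2 - g i * u i) =
      B / μ * ∑ i, (g i + 1) * (x i * u i ^ 2) - ∑ i, (g i + 1) * (x i * u i)
        + ∑ i, x i * u i := by
    rw [mul_sum, ← sum_sub_distrib, ← sum_add_distrib]
    exact sum_congr rfl fun i _ => by ring
  have hquad' : 1 / μ * ∑ j, p j * (A *ᵥ (x * u)) j ^ 2 ≤
      B / μ * ∑ i, (g i + 1) * (x i * u i ^ 2) := by
    rw [div_eq_mul_one_div B, mul_comm B, mul_assoc]
    exact mul_le_mul_of_nonneg_left hquad (one_div_pos.mpr hμ).le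
  have hexp := sum_penalty_sub_mul_le hμ u hS
  rw [hlin] at hexp
  rw [fmu_eq_penalty, fmu_eq_penalty, hsum, hrhs]
  linarith

end Descent

theorem xiTrunc_mem_uIcc {n : ℕ} (ε : ℝ) {g : Fin n → ℝ} {i : Fin n} (hg : -1 ≤ g i) :
    xiTrunc ε g i ∈ Set.uIcc 0 (g i) ∧ |xiTrunc ε g i| ≤ 1 := by
  unfold xiTrunc
  split_ifs with h0 h1
  · simp
  · exact ⟨Set.mem_uIcc.2 (Or.inl ⟨zero_le_one, h1.le⟩), by norm_num⟩
  · exact ⟨Set.right_mem_uIcc, abs_le.2 ⟨hg, not_lt.1 h1⟩⟩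

theorem xiBucket_eq_or_eq_zero {n : ℕ} (ε : ℝ) (ξ : Fin n → ℝ) (t : ℕ) (i : Fin n) :
    xiBucket ε ξ t i = ξ i ∨ xiBucket ε ξ t i = 0 :=
  ite_eq_or_eq _ _ _

theorem updStep_eq_sub_mul {n : ℕ} (α : ℝ) (x v : Fin n → ℝ) :
    updStep α x v = x - x * fun i => 1 - Real.exp (-(α * v i)) :=
  funext fun i => by simp only [updStep, Pi.sub_apply, Pi.mul_apply]; ring

theorem smoothing_param_pos_le_one {m n : ℕ} (hm : 0 < m) (hn : 0 < n) {ε : ℝ}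
    (hε : ε ∈ Set.Ioc (0 : ℝ) (1 / 2)) :
    0 < ε / (4 * Real.log (n * m / ε)) ∧ ε / (4 * Real.log (n * m / ε)) ≤ 1 := by
  obtain ⟨hε0, hε2⟩ := hε
  have h2 : 2 ≤ (n : ℝ) * m / ε := by
    have : (1 : ℝ) ≤ n * m :=
      one_le_mul_of_one_le_of_one_le (by exact_mod_cast hn) (by exact_mod_cast hm)
    rw [le_div_iff₀ hε0]
    linarith
  have hlog : 1 / 2 < Real.log (n * m / ε) :=
    (by linarith [Real.log_two_gt_d9] : (1 / 2 : ℝ) < Real.log 2).trans_le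
      (Real.log_le_log two_pos h2)
  refine ⟨div_pos hε0 (by linarith), ?_⟩
  rw [div_le_one (by linarith)]
  linarith

theorem objective_nonincreasing_general (m n : ℕ) (hm : 0 < m) (hn : 0 < n)
    (A : Matrix (Fin m) (Fin n) ℝ) (hA : ∀ j i, 0 ≤ A j i)
    (ε : ℝ) (hε : ε ∈ Set.Ioc (0 : ℝ) (1 / 2))
    (μ : ℝ) (hμ : μ = ε / (4 * Real.log ((n : ℝ) * m / ε)))
    (α : ℝ) (hα : α = μ / 20)
    (x : Fin n → ℝ) (hx : ∀ i, 0 ≤ x i) (hfeas : ∀ j, A.mulVec x j ≤ 1 + ε)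
    (t : ℕ) :
    fmu A μ (updStep α x (xiBucket ε (xiTrunc ε (gradFmu A μ x)) t)) ≤ fmu A μ x := by
  obtain ⟨hμ0, hμ1⟩ := hμ ▸ smoothing_param_pos_le_one hm hn hε
  have hα0 : 0 ≤ α := by rw [hα]; positivity
  set g := gradFmu A μ x
  set v := xiBucket ε (xiTrunc ε g) t
  have hv : ∀ i, v i ∈ Set.uIcc 0 (g i) ∧ |v i| ≤ 1 := fun i => by
    rcases xiBucket_eq_or_eq_zero ε (xiTrunc ε g) t i with h | h <;> rw [show v i = _ from h]
    exacts [xiTrunc_mem_uIcc ε (neg_one_le_gradFmu μ hA x i), by simp]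
  have hαv : ∀ i, α * |v i| ≤ α := fun i => mul_le_of_le_one_right hα0 (hv i).2
  have hu : ∀ i, |1 - Real.exp (-(α * v i))| ≤ 2 * α := fun i =>
    (abs_one_sub_exp_neg_mul_le hα0 ((hαv i).trans (by linarith))).trans (by linarith [hαv i])
  have hB : ∀ j, (A *ᵥ x) j ≤ 3 / 2 := fun j => by linarith [hfeas j, hε.2]
  have hS : ∀ j, |(A *ᵥ (x * fun i => 1 - Real.exp (-(α * v i)))) j| ≤ μ := fun j =>
    (abs_mulVec_mul_le hA hx hu j).trans (by nlinarith [hB j])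
  rw [updStep_eq_sub_mul]
  refine (fmu_sub_mul_le hμ0 hA hx hB hS).trans (add_le_of_nonpos_right (sum_nonpos fun i _ => ?_))
  refine mul_nonpos_of_nonneg_of_nonpos (hx i) (sub_nonpos.2 ?_)
  exact mul_sq_one_sub_exp_le hμ0 hα0 (by linarith) (by norm_num) (by linarith)
    (neg_one_le_gradFmu μ hA x i) (hv i).1 (hv i).2

/-- with `ε ∈ (0,1/2]`, `μ = ε/(4 log(nm/ε))`, `α = μ/20`, `x ≥ 0` with
`Ax ≤ (1 + ε)·1`, for every bucket `t < w` the update step never increases the smoothed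
objective: `f_μ(x′^{(t)}) ≤ f_μ(x)`. -/
theorem objective_nonincreasing (m n : ℕ) (hm : 0 < m) (hn : 0 < n)
    (A : Matrix (Fin m) (Fin n) ℝ) (hA : ∀ j i, 0 ≤ A j i)
    (ε : ℝ) (hε : ε ∈ Set.Ioc (0 : ℝ) (1 / 2))
    (μ : ℝ) (hμ : μ = ε / (4 * Real.log ((n : ℝ) * m / ε)))
    (α : ℝ) (hα : α = μ / 20)
    (x : Fin n → ℝ) (hx : ∀ i, 0 ≤ x i) (hfeas : ∀ j, A.mulVec x j ≤ 1 + ε)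
    (t : ℕ) (ht : t < wBuckets ε) :
    fmu A μ (updStep α x (xiBucket ε (xiTrunc ε (gradFmu A μ x)) t)) ≤ fmu A μ x :=
  objective_nonincreasing_general m n hm hn A hA ε hε μ hμ α hα x hx hfeas t
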